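/- g₃(1/4) = -2 - 3π/32 + (25/8)log 2, and this value is strictly negative. -/

import Mathlib

/-- The digamma function `ψ(x) = Γ'(x)/Γ(x)`. -/
noncomputable def digamma (x : ℝ) : ℝ := deriv Real.Gamma x / Real.Gamma x

/-- `g₂(x) = 3/2 - γ - ψ(x+1) - 2x(ψ(2x) - ψ(x))`. -/
noncomputable def g2 (x : ℝ) : ℝ :=
  3 / 2 - Real.eulerMascheroniConstant - digamma (x + 1)
    - 2 * x * (digamma (2 * x) - digamma x)

/-- `g₃(x) = 2 - γ - ψ(x+1) + (x/2)(5-3x)ψ(x) - x(1-6x)ψ(2x) - (3x/2)(1+3x)ψ(3x)`. -/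
noncomputable def g3 (x : ℝ) : ℝ :=
  2 - Real.eulerMascheroniConstant - digamma (x + 1)
    + x / 2 * (5 - 3 * x) * digamma x
    - x * (1 - 6 * x) * digamma (2 * x)
    - 3 * x / 2 * (1 + 3 * x) * digamma (3 * x)

/-- `β₁(ℓ) = (1/ℓ)(-γ - ψ(1/ℓ))`. -/
noncomputable def beta1 (l : ℝ) : ℝ :=
  1 / l * (-Real.eulerMascheroniConstant - digamma (1 / l))

/-- `β₂(ℓ) = (1/ℓ)[1 - γ - (1 - 2/ℓ)ψ(1/ℓ) - (2/ℓ)ψ(2/ℓ)]`. -/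
noncomputable def beta2 (l : ℝ) : ℝ :=
  1 / l * (1 - Real.eulerMascheroniConstant - (1 - 2 / l) * digamma (1 / l)
    - 2 / l * digamma (2 / l))

/-- `β₃(ℓ) = (1/ℓ)[3/2 - γ - (1 - 3/(2ℓ))(1 - 1/ℓ)ψ(1/ℓ) - (1/ℓ)(1 - 6/ℓ)ψ(2/ℓ)
  - (3/(2ℓ))(1 + 3/ℓ)ψ(3/ℓ)]`. -/
noncomputable def beta3 (l : ℝ) : ℝ :=
  1 / l * (3 / 2 - Real.eulerMascheroniConstant
    - (1 - 3 / (2 * l)) * (1 - 1 / l) * digamma (1 / l)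
    - 1 / l * (1 - 6 / l) * digamma (2 / l)
    - 3 / (2 * l) * (1 + 3 / l) * digamma (3 / l))
/-!
Logarithmic differentiation of Euler's reflection formula and of Legendre's duplication formula
at `x = 1/4` gives `ψ(3/4) - ψ(1/4) = π cot(π/4) = π` and
`ψ(1/4) + ψ(3/4) = 2ψ(1/2) - 2 log 2 = -2γ - 6 log 2`. Together with `ψ(5/4) = ψ(1/4) + 4`,
`g₃(1/4)` is a linear combination of these values, and its sign follows from `π > 3` and
`log 2 < 0.6932`.
-/

open Real

lemma ne_neg_natCast_of_pos {x : ℝ} (hx : 0 < x) (m : ℕ) : x ≠ -m :=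
  ((neg_nonpos.2 m.cast_nonneg).trans_lt hx).ne'

lemma logDeriv_comp_of_hasDerivAt {𝕜 : Type*} [NontriviallyNormedField 𝕜] {f g : 𝕜 → 𝕜}
    {x g' : 𝕜} (hf : DifferentiableAt 𝕜 f (g x)) (hg : HasDerivAt g g' x) :
    logDeriv (fun s => f (g s)) x = logDeriv f (g x) * g' := by
  rw [← hg.deriv]
  exact logDeriv_comp hf hg.differentiableAt

lemma logDeriv_const_rpow {a : ℝ} (ha : 0 < a) (y : ℝ) : logDeriv (fun t => a ^ t) y = log a := by
  rw [logDeriv_apply, (hasStrictDerivAt_const_rpow ha y).hasDerivAt.deriv,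
    mul_div_cancel_left₀ _ (rpow_pos_of_pos ha y).ne']

lemma digamma_eq_logDeriv : digamma = logDeriv Gamma := rfl

lemma digamma_one_half : digamma (1 / 2) = -eulerMascheroniConstant - 2 * log 2 := by
  rw [digamma_eq_logDeriv, logDeriv_apply, hasDerivAt_Gamma_one_half.deriv, Gamma_one_half_eq]
  field_simp
  ring

lemma digamma_add_one {x : ℝ} (hx : ∀ m : ℕ, x ≠ -m) : digamma (x + 1) = digamma x + x⁻¹ := by
  have hx₀ : x ≠ 0 := by simpa using hx 0
  have hx₁ : ∀ m : ℕ, x + 1 ≠ -m := fun m h => hx (m + 1) (by push_cast; linarith)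
  have hΓ : (fun s => Gamma (s + 1)) =ᶠ[nhds x] fun s => s * Gamma s := by
    filter_upwards [eventually_ne_nhds hx₀] with s hs using Gamma_add_one hs
  have key := (logDeriv_congr_nhds hΓ).eq_of_nhds
  rw [logDeriv_comp_of_hasDerivAt (g := (· + 1)) (differentiableAt_Gamma hx₁)
      ((hasDerivAt_id x).add_const 1),
    logDeriv_mul (f := fun s => s) x hx₀ (Gamma_ne_zero hx) differentiableAt_id
      (differentiableAt_Gamma hx)] at key
  simp only [mul_one, logDeriv_id'] at key
  rw [digamma_eq_logDeriv, key, one_div, add_comm]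

lemma digamma_one_sub_sub_digamma {x : ℝ} (hx : ∀ n : ℤ, x ≠ n) :
    digamma (1 - x) - digamma x = π * cot (π * x) := by
  have hx₀ : ∀ m : ℕ, x ≠ -m := fun m => by exact_mod_cast hx (-m)
  have hx₁ : ∀ m : ℕ, 1 - x ≠ -m := fun m h => hx (m + 1) (by push_cast; linarith)
  have hsin : sin (π * x) ≠ 0 := by
    rw [Ne, sin_eq_zero_iff]
    rintro ⟨n, hn⟩
    exact hx n (by nlinarith [pi_pos])
  have key : logDeriv (fun s => Gamma s * Gamma (1 - s)) x
      = logDeriv (fun s => π / sin (π * s)) x := by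
    rw [funext Gamma_mul_Gamma_one_sub]
  have hd : DifferentiableAt ℝ (fun s => Gamma (1 - s)) x :=
    (differentiableAt_Gamma hx₁).comp (f := (1 - ·)) x (by fun_prop)
  rw [logDeriv_mul (f := Gamma) (g := fun s => Gamma (1 - s)) x (Gamma_ne_zero hx₀)
      (Gamma_ne_zero hx₁) (differentiableAt_Gamma hx₀) hd,
    logDeriv_div x pi_ne_zero hsin (by fun_prop) (by fun_prop), logDeriv_const, Pi.zero_apply,
    logDeriv_comp_of_hasDerivAt (g := (1 - ·)) (differentiableAt_Gamma hx₁)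
      ((hasDerivAt_id x).const_sub 1),
    logDeriv_comp_of_hasDerivAt (g := (π * ·)) (by fun_prop) ((hasDerivAt_id x).const_mul π),
    logDeriv_sin] at key
  rw [digamma_eq_logDeriv]
  linear_combination -key

lemma digamma_add_digamma_add_half {x : ℝ} (hx : ∀ m : ℕ, 2 * x ≠ -m) :
    digamma x + digamma (x + 1 / 2) = 2 * digamma (2 * x) - 2 * log 2 := by
  have hx₁ : ∀ m : ℕ, x ≠ -m := fun m h => hx (2 * m) (by push_cast; linarith)
  have hx₂ : ∀ m : ℕ, x + 1 / 2 ≠ -m := fun m h => hx (2 * m + 1) (by push_cast; linarith)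
  have key : logDeriv (fun s => Gamma s * Gamma (s + 1 / 2)) x
      = logDeriv (fun s => Gamma (2 * s) * (2 : ℝ) ^ (1 - 2 * s) * √π) x := by
    rw [funext Gamma_mul_Gamma_add_half]
  have hd₁ : DifferentiableAt ℝ (fun s => Gamma (s + 1 / 2)) x :=
    (differentiableAt_Gamma hx₂).comp (f := (· + 1 / 2)) x (by fun_prop)
  have hd₂ : DifferentiableAt ℝ (fun s => Gamma (2 * s)) x :=
    (differentiableAt_Gamma hx).comp (f := (2 * ·)) x (by fun_prop)
  rw [logDeriv_mul (f := Gamma) (g := fun s => Gamma (s + 1 / 2)) x (Gamma_ne_zero hx₁)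
      (Gamma_ne_zero hx₂) (differentiableAt_Gamma hx₁) hd₁,
    logDeriv_mul_const x _ (by positivity),
    logDeriv_mul (f := fun s => Gamma (2 * s)) (g := fun s => (2 : ℝ) ^ (1 - 2 * s)) x
      (Gamma_ne_zero hx) (by positivity) hd₂ (by fun_prop (disch := norm_num)),
    logDeriv_comp_of_hasDerivAt (g := (· + 1 / 2)) (differentiableAt_Gamma hx₂)
      ((hasDerivAt_id x).add_const _),
    logDeriv_comp_of_hasDerivAt (g := (2 * ·)) (differentiableAt_Gamma hx)
      ((hasDerivAt_id x).const_mul 2),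
    logDeriv_comp_of_hasDerivAt (f := fun t => (2 : ℝ) ^ t) (g := (1 - 2 * ·))
      (by fun_prop (disch := norm_num)) (((hasDerivAt_id x).const_mul 2).const_sub 1),
    logDeriv_const_rpow two_pos] at key
  rw [digamma_eq_logDeriv]
  linear_combination key

lemma digamma_three_quarters_sub_digamma_one_quarter :
    digamma (3 / 4) - digamma (1 / 4) = π := by
  have hx : ∀ n : ℤ, (1 / 4 : ℝ) ≠ n := fun n h => by
    have h₀ : (0 : ℤ) < n := by exact_mod_cast (by linarith : (0 : ℝ) < n)
    have h₁ : n < 1 := by exact_mod_cast (by linarith : (n : ℝ) < 1)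
    omega
  have h := digamma_one_sub_sub_digamma hx
  rwa [show π * (1 / 4) = π / 4 by ring, cot_eq_cos_div_sin, cos_pi_div_four, sin_pi_div_four,
    div_self (by positivity), mul_one, show (1 : ℝ) - 1 / 4 = 3 / 4 by norm_num] at h

lemma digamma_one_quarter_add_digamma_three_quarters :
    digamma (1 / 4) + digamma (3 / 4) = -2 * eulerMascheroniConstant - 6 * log 2 := by
  have h := digamma_add_digamma_add_half (x := 1 / 4) (ne_neg_natCast_of_pos (by norm_num))
  norm_num [digamma_one_half] at h
  linear_combination h

theorem g3_one_quarter :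
    g3 (1 / 4) = -2 - 3 * Real.pi / 32 + 25 / 8 * Real.log 2 ∧ g3 (1 / 4) < 0 := by
  have h54 : digamma (5 / 4) = digamma (1 / 4) + 4 := by
    have h := digamma_add_one (x := 1 / 4) (ne_neg_natCast_of_pos (by norm_num))
    norm_num at h
    exact h
  have hval : g3 (1 / 4) = -2 - 3 * π / 32 + 25 / 8 * log 2 := by
    rw [g3, show (1 / 4 + 1 : ℝ) = 5 / 4 by norm_num, show (2 * (1 / 4) : ℝ) = 1 / 2 by norm_num,
      show (3 * (1 / 4) : ℝ) = 3 / 4 by norm_num]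
    linear_combination -h54 + 1 / 8 * digamma_one_half
      - 9 / 16 * digamma_one_quarter_add_digamma_three_quarters
      - 3 / 32 * digamma_three_quarters_sub_digamma_one_quarter
  refine ⟨hval, ?_⟩
  rw [hval]
  linarith [pi_gt_three, log_two_lt_d9]
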